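/- Given a fractional packing \(\mathcal{P}\) of odd \(T\)-walks in \((G, T, cap)\), the symmetrized lift \(\mathcal{Q} = \frac{1}{2}(\widetilde{\mathcal{P}} + \widetilde{\mathcal{P}}')\) satisfies \(\mathcal{Q}(xy') = \frac{1}{2}\mathcal{P}(xy) \leq \widetilde{cap}(xy')\) for every edge \(xy \in E(G)\); in particular \(\mathcal{Q}\) is a feasible multiflow in \((\widetilde{G}, \widetilde{T}, \widetilde{cap})\) of the same value as \(\mathcal{P}\). -/

import Mathlib

/-- The bipartite double cover `G̃` of `G`. -/
def doubleCover {V : Type*} (G : SimpleGraph V) : SimpleGraph (V ⊕ V) where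
  Adj a b := ∃ u v, G.Adj u v ∧
    ((a = Sum.inl u ∧ b = Sum.inr v) ∨ (a = Sum.inr u ∧ b = Sum.inl v))
  symm := by
    constructor
    rintro a b ⟨u, v, h, (⟨rfl, rfl⟩ | ⟨rfl, rfl⟩)⟩
    · exact ⟨v, u, h.symm, Or.inr ⟨rfl, rfl⟩⟩
    · exact ⟨v, u, h.symm, Or.inl ⟨rfl, rfl⟩⟩
  loopless := by
    constructor
    rintro a ⟨u, v, h, (⟨rfl, h2⟩ | ⟨rfl, h2⟩)⟩ <;> simp at h2

/-- Capacities on the double cover: each of the two copies of edge `uv` gets `½ cap(uv)`. -/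
noncomputable def capTilde {V : Type*} (cap : Sym2 V → ℝ) (e : Sym2 (V ⊕ V)) : ℝ :=
  cap (Sym2.map (Sum.elim id id) e) / 2

/-!
Lift a walk `p` of `G` to `G̃` by alternating between the two layers. Every traversal of `uv`
by `p` becomes a traversal of exactly one of `uv'`, `u'v` by the lift, and the lift started in
the other layer is its mirror image, which traverses `uv'` exactly when the first traverses
`u'v`. So the two lifts of `W` together traverse `uv'` as often as `W` traverses `uv`, and
giving each of them weight `α / 2` halves every load while keeping the total value. Odd length
makes a lift end in the layer opposite to its start.
-/

namespace doubleCover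

variable {V : Type*} {G : SimpleGraph V}

/-- `layer true v` is `v` and `layer false v` is its copy `v'`. -/
def layer (s : Bool) (v : V) : V ⊕ V := bif s then Sum.inl v else Sum.inr v

@[simp] lemma layer_true (v : V) : layer true v = Sum.inl v := rfl

@[simp] lemma layer_false (v : V) : layer false v = Sum.inr v := rfl

lemma adj_layer {u v : V} (h : G.Adj u v) (s : Bool) :
    (doubleCover G).Adj (layer s u) (layer (!s) v) := by
  cases s
  · exact ⟨u, v, h, Or.inr ⟨rfl, rfl⟩⟩
  · exact ⟨u, v, h, Or.inl ⟨rfl, rfl⟩⟩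

def liftWalk : ∀ {a b : V} (p : G.Walk a b) (s : Bool),
    (doubleCover G).Walk (layer s a) (layer (s ^^ decide (Odd p.length)) b)
  | _, _, .nil, _ => SimpleGraph.Walk.nil.copy rfl (by simp)
  | _, _, .cons h p, s =>
      (SimpleGraph.Walk.cons (adj_layer h s) (liftWalk p (!s))).copy rfl
        (by cases s <;> simp [Nat.odd_add_one, ← Nat.not_even_iff_odd])

lemma edges_liftWalk_nil (a : V) (s : Bool) :
    (liftWalk (SimpleGraph.Walk.nil : G.Walk a a) s).edges = [] := by
  rw [liftWalk, SimpleGraph.Walk.edges_copy, SimpleGraph.Walk.edges_nil]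

lemma edges_liftWalk_cons {a b c : V} (h : G.Adj a b) (p : G.Walk b c) (s : Bool) :
    (liftWalk (.cons h p) s).edges = s(layer s a, layer (!s) b) :: (liftWalk p (!s)).edges := by
  rw [liftWalk, SimpleGraph.Walk.edges_copy, SimpleGraph.Walk.edges_cons]

section count

variable [DecidableEq V] {u v : V}

lemma ite_edge_layer_add_ite_edge_layer_not (huv : u ≠ v) (a b : V) (s : Bool) :
    ((if s(layer s a, layer (!s) b) = s(Sum.inl u, Sum.inr v) then 1 else 0) +
      (if s(layer (!s) a, layer s b) = s(Sum.inl u, Sum.inr v) then 1 else 0) : ℕ) =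
      if s(a, b) = s(u, v) then 1 else 0 := by
  cases s <;>
    simp only [layer_true, layer_false, Bool.not_true, Bool.not_false, Sym2.eq_iff] <;> grind

lemma count_liftWalk_add_count_liftWalk_not (huv : u ≠ v) {a b : V} (p : G.Walk a b)
    (s : Bool) :
    (liftWalk p s).edges.count s(Sum.inl u, Sum.inr v) +
        (liftWalk p (!s)).edges.count s(Sum.inl u, Sum.inr v) =
      p.edges.count s(u, v) := by
  induction p generalizing s with
  | nil => rw [edges_liftWalk_nil, edges_liftWalk_nil]; rfl
  | @cons c d _ h p ih =>
    have hstep := ite_edge_layer_add_ite_edge_layer_not huv c d s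
    have ih' := ih (!s)
    rw [Bool.not_not] at ih'
    rw [edges_liftWalk_cons, edges_liftWalk_cons, Bool.not_not, SimpleGraph.Walk.edges_cons]
    simp only [List.count_cons, beq_iff_eq]
    omega

end count

/-- The paper's `W̃`. -/
def liftOdd {a b : V} (p : G.Walk a b) (hp : Odd p.length) :
    (doubleCover G).Walk (Sum.inl a) (Sum.inr b) :=
  (liftWalk p true).copy (layer_true a) (by simp [hp])

/-- The reverse of the paper's `W̃'`, which runs from `a'` to `b`. -/
def liftOddMirror {a b : V} (p : G.Walk a b) (hp : Odd p.length) :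
    (doubleCover G).Walk (Sum.inl b) (Sum.inr a) :=
  ((liftWalk p false).copy (layer_false a) (by simp [hp])).reverse

lemma count_liftOdd_add_count_liftOddMirror [DecidableEq V] {u v : V} (huv : u ≠ v) {a b : V}
    (p : G.Walk a b) (hp : Odd p.length) :
    (liftOdd p hp).edges.count s(Sum.inl u, Sum.inr v) +
        (liftOddMirror p hp).edges.count s(Sum.inl u, Sum.inr v) =
      p.edges.count s(u, v) := by
  rw [liftOdd, liftOddMirror, SimpleGraph.Walk.edges_reverse, List.count_reverse,
    SimpleGraph.Walk.edges_copy, SimpleGraph.Walk.edges_copy]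
  exact count_liftWalk_add_count_liftWalk_not huv p true

section symmetrize

variable {m : ℕ} {x y : Fin m → V} (W : ∀ i, G.Walk (x i) (y i)) (hodd : ∀ i, Odd (W i).length)

/-- The walks of `𝒬 = ½(𝒫̃ + 𝒫̃')`, each to carry weight `αᵢ / 2`. -/
def symmetrizedLift (j : Fin (m + m)) :
    (doubleCover G).Walk (Sum.inl (Fin.append x y j)) (Sum.inr (Fin.append y x j)) :=
  Fin.addCases (motive := fun j =>
      (doubleCover G).Walk (Sum.inl (Fin.append x y j)) (Sum.inr (Fin.append y x j)))
    (fun i => (liftOdd (W i) (hodd i)).copy (by rw [Fin.append_left]) (by rw [Fin.append_left]))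
    (fun i => (liftOddMirror (W i) (hodd i)).copy (by rw [Fin.append_right])
      (by rw [Fin.append_right])) j

lemma sum_mul_count_symmetrizedLift [DecidableEq V] {u v : V} (huv : u ≠ v) (α : Fin m → ℝ) :
    ∑ j, Fin.append (fun i => α i / 2) (fun i => α i / 2) j *
        ((symmetrizedLift W hodd j).edges.count s(Sum.inl u, Sum.inr v) : ℝ) =
      1 / 2 * ∑ i, α i * ((W i).edges.count s(u, v) : ℝ) := by
  rw [Fin.sum_univ_add, ← Finset.sum_add_distrib, Finset.mul_sum]
  refine Finset.sum_congr rfl fun i _ => ?_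
  have hcount : ((liftOdd (W i) (hodd i)).edges.count s(Sum.inl u, Sum.inr v) : ℝ) +
      (liftOddMirror (W i) (hodd i)).edges.count s(Sum.inl u, Sum.inr v) =
      (W i).edges.count s(u, v) :=
    mod_cast count_liftOdd_add_count_liftOddMirror huv (W i) (hodd i)
  simp only [symmetrizedLift, Fin.append_left, Fin.append_right, Fin.addCases_left,
    Fin.addCases_right, SimpleGraph.Walk.edges_copy, ← hcount]
  ring

end symmetrize

end doubleCover

lemma capTilde_mk_inl_inr {V : Type*} (cap : Sym2 V → ℝ) (u v : V) :
    capTilde cap s(Sum.inl u, Sum.inr v) = cap s(u, v) / 2 := rfl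

open doubleCover

/-- Given a fractional packing `𝒫` of odd `T`-walks in `(G, T, cap)`, there is a
feasible multiflow `𝒬` in `(G̃, T̃, c̃ap)` with commodity graph `H_T` whose load on
each edge `xy'` equals `½ 𝒫(xy) ≤ c̃ap(xy')`, and whose value equals that of `𝒫`. -/
theorem stmt10 {V : Type*} [DecidableEq V] (G : SimpleGraph V)
    (T : Set V) (cap : Sym2 V → ℝ)
    (m : ℕ) (α : Fin m → ℝ) (hα : ∀ i, 0 ≤ α i)
    (x y : Fin m → V) (W : ∀ i, G.Walk (x i) (y i))
    (hterm : ∀ i, x i ∈ T ∧ y i ∈ T ∧ x i ≠ y i)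
    (hodd : ∀ i, Odd (W i).length)
    (hpack : ∀ e ∈ G.edgeSet, ∑ i, α i * ((W i).edges.count e : ℝ) ≤ cap e) :
    ∃ (m' : ℕ) (β : Fin m' → ℝ) (x' y' : Fin m' → V)
      (Q : ∀ j, (doubleCover G).Walk (Sum.inl (x' j)) (Sum.inr (y' j))),
      (∀ j, 0 ≤ β j) ∧
      (∀ j, x' j ∈ T ∧ y' j ∈ T ∧ x' j ≠ y' j) ∧
      -- the load of `𝒬` on each edge `xy'` is `½ 𝒫(xy)` and is within capacity:
      (∀ u v, G.Adj u v →
        ∑ j, β j * (((Q j).edges.count s(Sum.inl u, Sum.inr v) : ℕ) : ℝ)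
          = (1 / 2) * ∑ i, α i * ((W i).edges.count s(u, v) : ℝ) ∧
        ∑ j, β j * (((Q j).edges.count s(Sum.inl u, Sum.inr v) : ℕ) : ℝ)
          ≤ capTilde cap s(Sum.inl u, Sum.inr v)) ∧
      -- same value:
      ∑ j, β j = ∑ i, α i := by
  refine ⟨m + m, Fin.append (fun i => α i / 2) (fun i => α i / 2), Fin.append x y,
    Fin.append y x, symmetrizedLift W hodd, ?_, ?_, fun u v huv => ?_, ?_⟩
  · refine Fin.addCases (fun i => ?_) (fun i => ?_) <;>
      simp only [Fin.append_left, Fin.append_right] <;> linarith [hα i]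
  · refine Fin.addCases (fun i => ?_) (fun i => ?_) <;>
      simp only [Fin.append_left, Fin.append_right]
    · exact hterm i
    · obtain ⟨hx, hy, hxy⟩ := hterm i
      exact ⟨hy, hx, hxy.symm⟩
  · have hload := sum_mul_count_symmetrizedLift W hodd huv.ne α
    refine ⟨hload, ?_⟩
    rw [hload, capTilde_mk_inl_inr]
    linarith [hpack s(u, v) huv]
  · rw [Fin.sum_univ_add, ← Finset.sum_add_distrib]
    simp only [Fin.append_left, Fin.append_right, add_halves]
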